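/- arXiv:1912.03757 — 2 statements merged into one kernel-verified Lean document; each statement's English description precedes it below -/
import Mathlib

section
/- Let A be a Young function, ξ<0, R∈(0,∞) and ε∈(0,R), and assume ∫_0^c A(s) s^{1/ξ−1} ds < ∞ for some c>0. Then there exists a constant C≥1 such that for every a∈(0,R−ε): ‖t^ξ χ_{(a,R)}(t)‖_{L^A(0,R)} ≤ ‖t^ξ χ_{(a,∞)}(t)‖_{L^A(0,∞)} ≤ C·‖t^ξ χ_{(a,R)}(t)‖_{L^A(0,R)}. -/
/-!
Every scaling admissible on `(0, ∞)` is admissible on `(0, R)`, which gives the first inequality.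
Conversely, if `λ` is admissible on `(0, R)` then so is `C λ` on `(0, ∞)`: by convexity
`A (x / C) ≤ A x / C`, so the part over `(0, R)` contributes at most `1 / C ≤ 1 / 2`, and the tail
`∫_R^∞ A (t ^ ξ / (C λ)) dt` is at most `J / (C λ)`, where `J = ∫_R^∞ A (t ^ ξ) dt` is finite by the
substitution `x = t ^ ξ` and the integrability hypothesis near `0`. It remains to make `C λ ≥ 2 J`
uniformly in `a`: since `A` is unbounded and all the functions exceed `R ^ ξ` on `(R - ε, R)`, the
admissible `λ` are bounded below independently of `a`.
-/

open MeasureTheory Filter Set Real Topology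
open scoped ENNReal

noncomputable section

/-- `A` is a Young function with density `a`. -/
def IsYoungWith (A a : ℝ → ℝ) : Prop :=
  a 0 = 0 ∧ (∀ s, 0 < s → 0 < a s) ∧
  MonotoneOn a (Set.Ici 0) ∧
  (∀ s, 0 ≤ s → ContinuousWithinAt a (Set.Ici s) s) ∧
  Filter.Tendsto a Filter.atTop Filter.atTop ∧
  (∀ t, 0 ≤ t → A t = ∫ s in (0:ℝ)..t, a s)

/-- `A` is a Young function. -/
def IsYoung (A : ℝ → ℝ) : Prop := ∃ a, IsYoungWith A a

/-- The Luxemburg norm of `f` in the Orlicz space `L^A(S)`. -/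
def luxNorm (A : ℝ → ℝ) (S : Set ℝ) (f : ℝ → ℝ) : ℝ :=
  sInf {lam : ℝ | 0 < lam ∧ (∫⁻ t in S, ENNReal.ofReal (A (|f t| / lam))) ≤ 1}

theorem integrableOn_Ioi_comp_rpow_of_integrableOn_Ioo (f : ℝ → ℝ) {ξ R : ℝ} (hξ : ξ < 0)
    (hR : 0 < R) (h : IntegrableOn (fun x => f x * x ^ (1/ξ - 1)) (Ioo 0 (R ^ ξ))) :
    IntegrableOn (fun t => f (t ^ ξ)) (Ioi R) := by
  have hp : 1/ξ < 0 := one_div_neg.mpr hξ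
  set F := (Ioi R).indicator fun t => f (t ^ ξ) with hF_def
  -- `x ↦ x ^ (1/ξ)` maps `Ioo 0 (R ^ ξ)` onto `Ioi R`
  have hsubst : EqOn ((Ioo 0 (R ^ ξ)).indicator fun x => |1/ξ| * (f x * x ^ (1/ξ - 1)))
      (fun x => (|1/ξ| * x ^ (1/ξ - 1)) • F (x ^ (1/ξ))) (Ioi 0) := by
    intro x (hx : 0 < x)
    have hmem : x ^ (1/ξ) ∈ Ioi R ↔ x ∈ Ioo 0 (R ^ ξ) := by
      have hR' : (R ^ ξ) ^ (1/ξ) = R := by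
        rw [← Real.rpow_mul hR.le, mul_one_div_cancel hξ.ne, Real.rpow_one]
      rw [mem_Ioi, mem_Ioo]
      conv_lhs => rw [← hR', Real.rpow_lt_rpow_iff_of_neg (Real.rpow_pos_of_pos hR ξ) hx hp]
      exact ⟨fun h => ⟨hx, h⟩, And.right⟩
    dsimp only
    rw [hF_def, smul_eq_mul]
    by_cases hx' : x ∈ Ioo 0 (R ^ ξ)
    · rw [indicator_of_mem hx', indicator_of_mem (hmem.mpr hx'),
        ← Real.rpow_mul hx.le, one_div_mul_cancel hξ.ne, Real.rpow_one]
      ring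
    · rw [indicator_of_notMem hx', indicator_of_notMem (mt hmem.mp hx'), mul_zero]
  have hF : IntegrableOn F (Ioi 0) := by
    refine (integrableOn_Ioi_comp_rpow_iff F hp.ne).mp ?_
    refine IntegrableOn.congr_fun ?_ hsubst measurableSet_Ioi
    exact ((integrable_indicator_iff measurableSet_Ioo).mpr (h.const_mul _)).integrableOn
  have hFR := (integrableOn_indicator_iff measurableSet_Ioi).mp (hF.mono_set (Ioi_subset_Ioi hR.le))
  exact hFR.mono_set (by simp)

theorem integrableOn_Ioo_zero_mul_rpow_of_monotoneOn {g : ℝ → ℝ} {c p : ℝ}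
    (hg : MonotoneOn g (Ici 0)) (hc : 0 < c)
    (h : IntegrableOn (fun s => g s * s ^ p) (Ioo 0 c)) (d : ℝ) :
    IntegrableOn (fun s => g s * s ^ p) (Ioo 0 d) := by
  have hcd : IntegrableOn (fun s => g s * s ^ p) (Icc c d) :=
    ((hg.mono fun s hs => hc.le.trans hs.1).integrableOn_isCompact isCompact_Icc).mul_continuousOn
      (fun s hs => (Real.continuousAt_rpow_const s p
        (Or.inl (hc.trans_le hs.1).ne')).continuousWithinAt) isCompact_Icc
  refine (h.union hcd).mono_set fun s hs => ?_
  rcases lt_or_ge s c with hsc | hsc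
  · exact Or.inl ⟨hs.1, hsc⟩
  · exact Or.inr ⟨hsc, hs.2.le⟩

theorem eqOn_indicator_Ioo_indicator_Ioi (f : ℝ → ℝ) (u R : ℝ) :
    EqOn ((Ioo u R).indicator f) ((Ioi u).indicator f) (Iio R) := by
  intro t (ht : t < R)
  simp [indicator, ht]

theorem lintegral_Ioi_indicator_rpow_eq (A : ℝ → ℝ) {ξ u R : ℝ} (hR : 0 < R) (huR : u < R)
    (lam : ℝ) :
    ∫⁻ t in Ioi 0, ENNReal.ofReal (A (|(Ioi u).indicator (fun t => t ^ ξ) t| / lam))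
      = (∫⁻ t in Ioo 0 R, ENNReal.ofReal (A (|(Ioo u R).indicator (fun t => t ^ ξ) t| / lam)))
        + ∫⁻ t in Ici R, ENNReal.ofReal (A (t ^ ξ / lam)) := by
  rw [← Ioo_union_Ici_eq_Ioi hR, lintegral_union measurableSet_Ici
    (disjoint_left.mpr fun t ht ht' => (not_lt.mpr ht') ht.2)]
  congr 1
  · refine setLIntegral_congr_fun measurableSet_Ioo fun t ht => ?_
    rw [eqOn_indicator_Ioo_indicator_Ioi _ u R ht.2]
  · refine setLIntegral_congr_fun measurableSet_Ici fun t ht => ?_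
    rw [indicator_of_mem (show t ∈ Ioi u from huR.trans_le ht),
      abs_of_pos (Real.rpow_pos_of_pos (hR.trans_le ht) ξ)]

def luxAdmissible (A : ℝ → ℝ) (S : Set ℝ) (f : ℝ → ℝ) : Set ℝ :=
  {lam : ℝ | 0 < lam ∧ (∫⁻ t in S, ENNReal.ofReal (A (|f t| / lam))) ≤ 1}

theorem luxNorm_eq_sInf (A : ℝ → ℝ) (S : Set ℝ) (f : ℝ → ℝ) :
    luxNorm A S f = sInf (luxAdmissible A S f) := rfl

theorem bddBelow_luxAdmissible (A : ℝ → ℝ) (S : Set ℝ) (f : ℝ → ℝ) :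
    BddBelow (luxAdmissible A S f) :=
  ⟨0, fun _ h => h.1.le⟩

theorem luxAdmissible_subset {A f g : ℝ → ℝ} {S T : Set ℝ} (hS : MeasurableSet S) (hST : S ⊆ T)
    (hfg : EqOn f g S) :
    luxAdmissible A T g ⊆ luxAdmissible A S f := by
  refine fun lam ⟨hlam, h⟩ => ⟨hlam, le_trans ?_ h⟩
  calc (∫⁻ t in S, ENNReal.ofReal (A (|f t| / lam)))
      = ∫⁻ t in S, ENNReal.ofReal (A (|g t| / lam)) :=
        setLIntegral_congr_fun hS fun t ht => by rw [hfg ht]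
    _ ≤ _ := lintegral_mono_set hST

theorem luxNorm_le_of_luxAdmissible_subset {A f g : ℝ → ℝ} {S T : Set ℝ}
    (h : luxAdmissible A T g ⊆ luxAdmissible A S f) (hne : (luxAdmissible A T g).Nonempty) :
    luxNorm A S f ≤ luxNorm A T g :=
  csInf_le_csInf (bddBelow_luxAdmissible A S f) hne h

theorem luxNorm_le_mul_of_mul_mem {A f g : ℝ → ℝ} {S T : Set ℝ} {C : ℝ} (hC : 0 < C)
    (hne : (luxAdmissible A S f).Nonempty)
    (h : ∀ lam ∈ luxAdmissible A S f, C * lam ∈ luxAdmissible A T g) :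
    luxNorm A T g ≤ C * luxNorm A S f := by
  rw [luxNorm_eq_sInf, luxNorm_eq_sInf, ← div_le_iff₀' hC]
  exact le_csInf hne fun lam hlam =>
    (div_le_iff₀' hC).mpr (csInf_le (bddBelow_luxAdmissible A T g) (h lam hlam))

theorem ofReal_mul_volume_le_of_mem_luxAdmissible {A f : ℝ → ℝ} {S E : Set ℝ} {lam K : ℝ}
    (hlam : lam ∈ luxAdmissible A S f) (hE : MeasurableSet E) (hES : E ⊆ S)
    (hK : ∀ t ∈ E, K ≤ A (|f t| / lam)) :
    ENNReal.ofReal K * volume E ≤ 1 :=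
  calc ENNReal.ofReal K * volume E = ∫⁻ _ in E, ENNReal.ofReal K := (setLIntegral_const _ _).symm
    _ ≤ ∫⁻ t in E, ENNReal.ofReal (A (|f t| / lam)) :=
        setLIntegral_mono' hE fun t ht => ENNReal.ofReal_le_ofReal (hK t ht)
    _ ≤ ∫⁻ t in S, ENNReal.ofReal (A (|f t| / lam)) := lintegral_mono_set hES
    _ ≤ 1 := hlam.2

namespace IsYoungWith

variable {A a : ℝ → ℝ}

theorem intervalIntegrable (hA : IsYoungWith A a) {x y : ℝ} (hx : 0 ≤ x) (hxy : x ≤ y) :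
    IntervalIntegrable a volume x y :=
  (hA.2.2.1.mono fun _ hu => hx.trans (Set.uIcc_of_le hxy ▸ hu).1).intervalIntegrable

theorem density_nonneg (hA : IsYoungWith A a) {s : ℝ} (hs : 0 ≤ s) : 0 ≤ a s := by
  rcases hs.eq_or_lt with rfl | hs
  · exact hA.1.ge
  · exact (hA.2.1 s hs).le

theorem monotoneOn (hA : IsYoungWith A a) : MonotoneOn A (Ici 0) := by
  intro x hx y hy hxy
  rw [hA.2.2.2.2.2 x hx, hA.2.2.2.2.2 y hy]
  exact intervalIntegral.integral_mono_interval le_rfl hx hxy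
    (ae_restrict_of_forall_mem measurableSet_Ioc fun s hs => hA.density_nonneg hs.1.le)
    (hA.intervalIntegrable le_rfl hy)

theorem pos (hA : IsYoungWith A a) {x : ℝ} (hx : 0 < x) : 0 < A x := by
  rw [hA.2.2.2.2.2 x hx.le]
  exact intervalIntegral.intervalIntegral_pos_of_pos_on (hA.intervalIntegrable le_rfl hx.le)
    (fun s hs => hA.2.1 s hs.1) hx

theorem apply_div_le (hA : IsYoungWith A a) {C x : ℝ} (hC : 1 ≤ C) (hx : 0 ≤ x) :
    A (x / C) ≤ A x / C := by
  have hC0 : 0 < C := zero_lt_one.trans_le hC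
  rw [le_div_iff₀ hC0, hA.2.2.2.2.2 _ (div_nonneg hx hC0.le), hA.2.2.2.2.2 x hx, mul_comm]
  have hsub : (∫ s in (0:ℝ)..x, a (s / C)) = C * ∫ s in (0:ℝ)..(x / C), a s := by
    simp [intervalIntegral.integral_comp_div a hC0.ne']
  rw [← hsub]
  have hdiv : ∀ s ∈ Icc 0 x, 0 ≤ s / C ∧ s / C ≤ s := fun s hs =>
    ⟨div_nonneg hs.1 hC0.le, div_le_self hs.1 hC⟩
  refine intervalIntegral.integral_mono_on hx ?_ (hA.intervalIntegrable le_rfl hx) fun s hs =>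
    hA.2.2.1 (hdiv s hs).1 hs.1 (hdiv s hs).2
  refine MonotoneOn.intervalIntegrable fun u hu v hv huv => ?_
  rw [Set.uIcc_of_le hx] at hu hv
  exact hA.2.2.1 (hdiv u hu).1 (hdiv v hv).1 (by gcongr)

theorem tendsto_atTop (hA : IsYoungWith A a) : Tendsto A atTop atTop := by
  refine tendsto_atTop_mono' _ ?_ (tendsto_id.const_mul_atTop (hA.pos zero_lt_one))
  filter_upwards [eventually_ge_atTop 1] with x hx
  have h := hA.apply_div_le hx (zero_le_one.trans hx)
  rw [div_self (zero_lt_one.trans_le hx).ne', le_div_iff₀ (zero_lt_one.trans_le hx)] at h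
  simpa [mul_comm] using h

theorem setLIntegral_comp_rpow_lt_top (hA : IsYoungWith A a) {ξ c R : ℝ} (hξ : ξ < 0) (hc : 0 < c)
    (hconv : IntegrableOn (fun s => A s * s ^ (1/ξ - 1)) (Ioo 0 c)) (hR : 0 < R) :
    ∫⁻ t in Ici R, ENNReal.ofReal (A (t ^ ξ)) < ∞ := by
  have h := integrableOn_Ioi_comp_rpow_of_integrableOn_Ioo A hξ hR
    (integrableOn_Ioo_zero_mul_rpow_of_monotoneOn hA.monotoneOn hc hconv _)
  rw [Measure.restrict_congr_set Ioi_ae_eq_Ici.symm]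
  exact h.setLIntegral_lt_top

theorem setLIntegral_div_le (hA : IsYoungWith A a) {S : Set ℝ} (hS : MeasurableSet S)
    {g : ℝ → ℝ} (hg : ∀ t ∈ S, 0 ≤ g t) {C : ℝ} (hC : 1 ≤ C) :
    ∫⁻ t in S, ENNReal.ofReal (A (g t / C))
      ≤ ENNReal.ofReal C⁻¹ * ∫⁻ t in S, ENNReal.ofReal (A (g t)) := by
  rw [← lintegral_const_mul' _ _ ENNReal.ofReal_ne_top]
  refine setLIntegral_mono' hS fun t ht => ?_
  rw [← ENNReal.ofReal_mul (inv_nonneg.mpr (zero_le_one.trans hC)), inv_mul_eq_div]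
  exact ENNReal.ofReal_le_ofReal (hA.apply_div_le hC (hg t ht))

theorem luxAdmissible_nonempty (hA : IsYoungWith A a) {S : Set ℝ} (hS : MeasurableSet S)
    {f : ℝ → ℝ} (hf : ∫⁻ t in S, ENNReal.ofReal (A |f t|) ≠ ∞) :
    (luxAdmissible A S f).Nonempty := by
  set I := ∫⁻ t in S, ENNReal.ofReal (A |f t|)
  have hlam : 1 ≤ max 1 I.toReal := le_max_left _ _
  refine ⟨max 1 I.toReal, zero_lt_one.trans_le hlam, ?_⟩
  calc ∫⁻ t in S, ENNReal.ofReal (A (|f t| / max 1 I.toReal))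
      ≤ ENNReal.ofReal (max 1 I.toReal)⁻¹ * I :=
        hA.setLIntegral_div_le hS (fun t _ => abs_nonneg (f t)) hlam
    _ = ENNReal.ofReal ((max 1 I.toReal)⁻¹ * I.toReal) := by
        rw [ENNReal.ofReal_mul (by positivity), ENNReal.ofReal_toReal hf]
    _ ≤ 1 := by
        rw [ENNReal.ofReal_le_one, inv_mul_le_iff₀ (zero_lt_one.trans_le hlam), mul_one]
        exact le_max_right _ _

theorem lintegral_Ioi_indicator_rpow_ne_top (hA : IsYoungWith A a) {ξ u R : ℝ} (hξ : ξ < 0)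
    (hu : 0 < u) (huR : u < R) (htail : ∫⁻ t in Ici R, ENNReal.ofReal (A (t ^ ξ)) ≠ ∞) :
    ∫⁻ t in Ioi 0, ENNReal.ofReal (A |(Ioi u).indicator (fun t => t ^ ξ) t|) ≠ ∞ := by
  have hsplit := lintegral_Ioi_indicator_rpow_eq A (ξ := ξ) (hu.trans huR) huR 1
  simp only [div_one] at hsplit
  rw [hsplit]
  refine ENNReal.add_ne_top.mpr ⟨ne_top_of_le_ne_top (b := ENNReal.ofReal (A (u ^ ξ)) * volume
    (Ioo (0:ℝ) R)) (by simp [ENNReal.mul_eq_top]) ?_, htail⟩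
  rw [← setLIntegral_const]
  refine setLIntegral_mono' measurableSet_Ioo fun t _ => ENNReal.ofReal_le_ofReal ?_
  have hle : |(Ioo u R).indicator (fun t => t ^ ξ) t| ≤ u ^ ξ := by
    by_cases ht : t ∈ Ioo u R
    · rw [indicator_of_mem ht, abs_of_pos (Real.rpow_pos_of_pos (hu.trans ht.1) ξ)]
      exact Real.rpow_le_rpow_of_nonpos hu ht.1.le hξ.le
    · rw [indicator_of_notMem ht, abs_zero]
      exact (Real.rpow_pos_of_pos hu ξ).le
  exact hA.monotoneOn (mem_Ici.mpr (abs_nonneg _)) (mem_Ici.mpr ((abs_nonneg _).trans hle)) hle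

/-- The bound is uniform in `u` because all these functions exceed `R ^ ξ` on `(R - ε, R)`. -/
theorem exists_pos_le_of_mem_luxAdmissible (hA : IsYoungWith A a) {ξ R ε : ℝ} (hξ : ξ < 0)
    (hε : 0 < ε) (hεR : ε < R) :
    ∃ lmin > 0, ∀ u ≤ R - ε,
      ∀ lam ∈ luxAdmissible A (Ioo 0 R) ((Ioo u R).indicator fun t => t ^ ξ), lmin ≤ lam := by
  obtain ⟨M, hM⟩ := ((hA.tendsto_atTop.eventually_ge_atTop (2 / ε)).and
    (eventually_gt_atTop 0)).exists_forall_of_atTop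
  have hR : 0 < R := hε.trans hεR
  have hRξ : 0 < R ^ ξ := Real.rpow_pos_of_pos hR ξ
  refine ⟨R ^ ξ / M, div_pos hRξ (hM M le_rfl).2, fun u hu lam hlam => ?_⟩
  by_contra! hlt
  have hbound := ofReal_mul_volume_le_of_mem_luxAdmissible (K := 2 / ε) hlam measurableSet_Ioo
    (Ioo_subset_Ioo_left (sub_pos.mpr hεR).le) fun t ht => by
      have ht0 : 0 < t := (sub_pos.mpr hεR).trans ht.1
      rw [indicator_of_mem (show t ∈ Ioo u R from ⟨hu.trans_lt ht.1, ht.2⟩),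
        abs_of_pos (Real.rpow_pos_of_pos ht0 ξ)]
      refine (hM _ (le_trans ?_ (div_le_div_of_nonneg_right
        (Real.rpow_le_rpow_of_nonpos ht0 ht.2.le hξ.le) hlam.1.le))).1
      rw [le_div_iff₀ hlam.1]
      exact ((lt_div_iff₀' (hM M le_rfl).2).mp hlt).le
  rw [Real.volume_Ioo, sub_sub_cancel, ← ENNReal.ofReal_mul (by positivity),
    div_mul_cancel₀ _ hε.ne', ENNReal.ofReal_le_one] at hbound
  norm_num at hbound

theorem mul_mem_luxAdmissible_Ioi (hA : IsYoungWith A a) {ξ u R C lam : ℝ} (hR : 0 < R)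
    (huR : u < R) (htail : ∫⁻ t in Ici R, ENNReal.ofReal (A (t ^ ξ)) ≠ ∞) (hC : 2 ≤ C)
    (hCl : max 1 (2 * (∫⁻ t in Ici R, ENNReal.ofReal (A (t ^ ξ))).toReal) ≤ C * lam)
    (hlam : lam ∈ luxAdmissible A (Ioo 0 R) ((Ioo u R).indicator fun t => t ^ ξ)) :
    C * lam ∈ luxAdmissible A (Ioi 0) ((Ioi u).indicator fun t => t ^ ξ) := by
  set J := ∫⁻ t in Ici R, ENNReal.ofReal (A (t ^ ξ))
  have hC1 : 1 ≤ C := one_le_two.trans hC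
  have hCl1 : 1 ≤ C * lam := (le_max_left _ _).trans hCl
  have hCl0 : 0 < C * lam := zero_lt_one.trans_le hCl1
  refine ⟨hCl0, ?_⟩
  have hbody : ∫⁻ t in Ioo 0 R,
      ENNReal.ofReal (A (|(Ioo u R).indicator (fun t => t ^ ξ) t| / (C * lam)))
        ≤ ENNReal.ofReal 2⁻¹ :=
    calc _ = ∫⁻ t in Ioo 0 R,
          ENNReal.ofReal (A (|(Ioo u R).indicator (fun t => t ^ ξ) t| / lam / C)) := by
          simp only [div_div, mul_comm C]
      _ ≤ ENNReal.ofReal C⁻¹ * 1 :=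
          (hA.setLIntegral_div_le measurableSet_Ioo
            (fun t _ => div_nonneg (abs_nonneg _) hlam.1.le) hC1).trans (mul_le_mul_right hlam.2 _)
      _ ≤ ENNReal.ofReal 2⁻¹ := by
          rw [mul_one]
          exact ENNReal.ofReal_le_ofReal (inv_anti₀ two_pos hC)
  have htail' : ∫⁻ t in Ici R, ENNReal.ofReal (A (t ^ ξ / (C * lam))) ≤ ENNReal.ofReal 2⁻¹ :=
    calc _ ≤ ENNReal.ofReal (C * lam)⁻¹ * J :=
          hA.setLIntegral_div_le measurableSet_Ici
            (fun t ht => (Real.rpow_pos_of_pos (hR.trans_le ht) ξ).le) hCl1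
      _ = ENNReal.ofReal ((C * lam)⁻¹ * J.toReal) := by
          rw [ENNReal.ofReal_mul (by positivity), ENNReal.ofReal_toReal htail]
      _ ≤ ENNReal.ofReal 2⁻¹ := by
          refine ENNReal.ofReal_le_ofReal ?_
          rw [inv_mul_le_iff₀ hCl0]
          linarith [le_max_right 1 (2 * J.toReal)]
  calc _ ≤ ENNReal.ofReal 2⁻¹ + ENNReal.ofReal 2⁻¹ :=
        (lintegral_Ioi_indicator_rpow_eq A hR huR _).trans_le (add_le_add hbody htail')
    _ = 1 := by rw [← ENNReal.ofReal_add (by norm_num) (by norm_num)]; norm_num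

end IsYoungWith

theorem statement3_general (A : ℝ → ℝ) (hA : IsYoung A) (ξ : ℝ) (hξ : ξ < 0)
    (c : ℝ) (hc : 0 < c)
    (hconv : MeasureTheory.IntegrableOn (fun s => A s * s ^ (1/ξ - 1)) (Set.Ioo 0 c))
    (R ε : ℝ) (hε : ε ∈ Set.Ioo 0 R) :
    ∃ C : ℝ, 1 ≤ C ∧ ∀ a ∈ Set.Ioo (0:ℝ) (R - ε),
      luxNorm A (Set.Ioo 0 R) ((Set.Ioo a R).indicator fun t => t ^ ξ)
          ≤ luxNorm A (Set.Ioi 0) ((Set.Ioi a).indicator fun t => t ^ ξ) ∧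
      luxNorm A (Set.Ioi 0) ((Set.Ioi a).indicator fun t => t ^ ξ)
          ≤ C * luxNorm A (Set.Ioo 0 R) ((Set.Ioo a R).indicator fun t => t ^ ξ) := by
  obtain ⟨ρ, hA⟩ := hA
  obtain ⟨hε0, hεR⟩ := hε
  have hR : 0 < R := hε0.trans hεR
  have htail := (hA.setLIntegral_comp_rpow_lt_top hξ hc hconv hR).ne
  set J := (∫⁻ t in Ici R, ENNReal.ofReal (A (t ^ ξ))).toReal
  obtain ⟨lmin, hlmin, hlow⟩ := hA.exists_pos_le_of_mem_luxAdmissible hξ hε0 hεR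
  set C := max 2 (max 1 (2 * J) / lmin)
  refine ⟨C, le_max_of_le_left one_le_two, fun u hu => ?_⟩
  have huR : u < R := hu.2.trans (sub_lt_self R hε0)
  have hsub := luxAdmissible_subset (A := A) (S := Ioo 0 R) measurableSet_Ioo Ioo_subset_Ioi_self
    ((eqOn_indicator_Ioo_indicator_Ioi (fun t => t ^ ξ) u R).mono fun t ht => ht.2)
  have hne := hA.luxAdmissible_nonempty measurableSet_Ioi
    (hA.lintegral_Ioi_indicator_rpow_ne_top hξ hu.1 huR htail)
  refine ⟨luxNorm_le_of_luxAdmissible_subset hsub hne,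
    luxNorm_le_mul_of_mul_mem (by positivity) (hne.mono hsub) fun lam hlam =>
      hA.mul_mem_luxAdmissible_Ioi hR huR htail (le_max_left _ _) ?_ hlam⟩
  calc max 1 (2 * J) = max 1 (2 * J) / lmin * lmin := (div_mul_cancel₀ _ hlmin.ne').symm
    _ ≤ C * lam := mul_le_mul (le_max_right _ _) (hlow u hu.2.le lam hlam) hlmin.le
        (by positivity)

theorem statement3 (A : ℝ → ℝ) (hA : IsYoung A) (ξ : ℝ) (hξ : ξ < 0)
    (c : ℝ) (hc : 0 < c)
    (hconv : MeasureTheory.IntegrableOn (fun s => A s * s ^ (1/ξ - 1)) (Set.Ioo 0 c))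
    (R ε : ℝ) (hR : 0 < R) (hε : ε ∈ Set.Ioo 0 R) :
    ∃ C : ℝ, 1 ≤ C ∧ ∀ a ∈ Set.Ioo (0:ℝ) (R - ε),
      luxNorm A (Set.Ioo 0 R) ((Set.Ioo a R).indicator fun t => t ^ ξ)
          ≤ luxNorm A (Set.Ioi 0) ((Set.Ioi a).indicator fun t => t ^ ξ) ∧
      luxNorm A (Set.Ioi 0) ((Set.Ioi a).indicator fun t => t ^ ξ)
          ≤ C * luxNorm A (Set.Ioo 0 R) ((Set.Ioo a R).indicator fun t => t ^ ξ) :=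
  statement3_general A hA ξ hξ c hc hconv R ε hε
end
end

section
/- Let 0<α<1, β>0 with α+1/β≥1, and let φ be a quasiconcave function on [0,1). For t∈(0,1) define Φ(t) := sup{ sup_{0<s<1} (φ(s)/s) ∫_0^s ( ∫_{r^β}^1 y^{α−1} χ_E(y) dy ) dr : E ⊆ (0,1) measurable with |E| = t }. Then there exist constants c₁,c₂>0, depending only on α and β, such that c₁ · t · sup_{t<s<1} φ(s^{1/β}) s^{α−1} ≤ Φ(t) ≤ c₂ · t · sup_{t<s<1} φ(s^{1/β}) s^{α−1} for every t∈(0,1/2). (Φ is the fundamental function of the largest rearrangement-invariant space X(0,1) with H_α^β : X(0,1) → M_φ(0,1) bounded.) -/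
open MeasureTheory Filter Set Real Topology
open scoped ENNReal

noncomputable section

/-- A quasiconcave function on `[0,1)`: it vanishes exactly at `0`, is nonnegative and
nondecreasing, and `t ↦ φ(t)/t` is nonincreasing on `(0,1)`. -/
def QuasiconcaveOn01 (φ : ℝ → ℝ) : Prop :=
  φ 0 = 0 ∧ (∀ t ∈ Set.Ioo (0:ℝ) 1, 0 < φ t) ∧
  (∀ t ∈ Set.Ico (0:ℝ) 1, 0 ≤ φ t) ∧
  MonotoneOn φ (Set.Ioo 0 1) ∧
  AntitoneOn (fun t => φ t / t) (Set.Ioo 0 1)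

/-- The Marcinkiewicz norm `sup_{0<s<1} (φ(s)/s) ∫₀ˢ (H_α^β χ_E)(r) dr` of `H_α^β χ_E`,
where `(H_α^β f)(r) = ∫_{r^β}^1 y^{α-1} f(y) dy`. -/
def marcQ (α β : ℝ) (φ : ℝ → ℝ) (E : Set ℝ) : ℝ :=
  sSup ((fun s => (φ s / s) *
    ∫ r in Set.Ioo (0:ℝ) s, ∫ y in Set.Ioo (r ^ β) 1, y ^ (α - 1) * E.indicator 1 y) ''
      Set.Ioo (0:ℝ) 1)

/-- `Φ(t)`: the supremum of the Marcinkiewicz norms of `H_α^β χ_E` over all measurable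
`E ⊆ (0,1)` with `|E| = t`; this is the fundamental function of the optimal
rearrangement-invariant domain space. -/
def PhiFun (α β : ℝ) (φ : ℝ → ℝ) (t : ℝ) : ℝ :=
  sSup {v : ℝ | ∃ E : Set ℝ, MeasurableSet E ∧ E ⊆ Set.Ioo 0 1 ∧
    volume E = ENNReal.ofReal t ∧ v = marcQ α β φ E}

/-!
By Fubini, `∫₀ˢ (H_α^β χ_E)(r) dr = ∫_E y^(α-1) min(s, y^(1/β)) dy`, and quasiconcavity of `φ`
bounds `(φ(s)/s) y^(α-1) min(s, y^(1/β))` by `ψ(y) = φ(y^(1/β)) y^(α-1)`. For the upper bound split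
`E` at `t`: on `E ∩ (t,1)`, a set of measure at most `t`, the integrand is at most `sup_(t,1) ψ`;
on `E ∩ (0,t]` it is at most `φ(t^(1/β)) y^(α-1)`, whose integral `t ψ(t)/α` is at most
`2^(1-α) t ψ(2t) / α`. For the lower bound, testing `E = (u-t, u)` with `2t ≤ u` at `s = u^(1/β)`
gives `2^(-1/β) t ψ(u)`, and the points `u ∈ (t, 2t)` are covered by `ψ(u) ≤ 2^(1-α) ψ(2t)`.
-/

lemma Ioo_inter_setOf_rpow_lt {β s y : ℝ} (hβ : 0 < β) (hy : 0 < y) :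
    Ioo 0 s ∩ {r | r ^ β < y} = Ioo 0 (min s (y ^ (1 / β))) := by
  ext r
  simp only [mem_inter_iff, mem_Ioo, mem_ofPred_eq, lt_min_iff]
  constructor
  · rintro ⟨⟨hr, hrs⟩, hry⟩
    exact ⟨hr, hrs, by rwa [one_div, Real.lt_rpow_inv_iff_of_pos hr.le hy.le hβ]⟩
  · rintro ⟨hr, hrs, hry⟩
    exact ⟨⟨hr, hrs⟩, by rwa [one_div, Real.lt_rpow_inv_iff_of_pos hr.le hy.le hβ] at hry⟩

lemma lintegral_Ioo_rpow_eq_lintegral_indicator (β r : ℝ) (g : ℝ → ℝ≥0∞) :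
    ∫⁻ y in Ioo (r ^ β) 1, g y
      = ∫⁻ y, {p : ℝ × ℝ | p.2 ∈ Ioo (p.1 ^ β) 1}.indicator (fun p => g p.2) (r, y) := by
  rw [← lintegral_indicator measurableSet_Ioo]
  rfl

lemma measurableSet_rpow_lt_lt_one (β : ℝ) :
    MeasurableSet {p : ℝ × ℝ | p.2 ∈ Ioo (p.1 ^ β) 1} :=
  (measurableSet_lt (measurable_fst.pow_const β) measurable_snd).inter
    (measurableSet_lt measurable_snd measurable_const)

lemma measurable_lintegral_Ioo_rpow (β : ℝ) {g : ℝ → ℝ≥0∞} (hg : Measurable g) :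
    Measurable fun r => ∫⁻ y in Ioo (r ^ β) 1, g y := by
  simp_rw [lintegral_Ioo_rpow_eq_lintegral_indicator]
  exact ((hg.comp measurable_snd).indicator (measurableSet_rpow_lt_lt_one β)).lintegral_prod_right'

lemma lintegral_Ioo_lintegral_Ioo_rpow {β s : ℝ} (hβ : 0 < β) {g : ℝ → ℝ≥0∞}
    (hg : Measurable g) :
    ∫⁻ r in Ioo 0 s, ∫⁻ y in Ioo (r ^ β) 1, g y
      = ∫⁻ y in Ioo 0 1, g y * ENNReal.ofReal (min s (y ^ (1 / β))) := by
  simp_rw [lintegral_Ioo_rpow_eq_lintegral_indicator]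
  rw [lintegral_lintegral_swap
      (f := fun r y => {p : ℝ × ℝ | p.2 ∈ Ioo (p.1 ^ β) 1}.indicator (fun p => g p.2) (r, y))
      ((hg.comp measurable_snd).indicator (measurableSet_rpow_lt_lt_one β)).aemeasurable,
    ← lintegral_indicator measurableSet_Ioo]
  refine lintegral_congr fun y => ?_
  by_cases hy : y ∈ Ioo 0 1
  · have : ∀ r, {p : ℝ × ℝ | p.2 ∈ Ioo (p.1 ^ β) 1}.indicator (fun p => g p.2) (r, y)
        = {r | r ^ β < y}.indicator (fun _ => g y) r := fun r => by
      simp [indicator_apply, hy.2]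
    have hm : MeasurableSet {r : ℝ | r ^ β < y} := measurableSet_lt (by fun_prop) measurable_const
    simp_rw [this]
    rw [lintegral_indicator_const hm, Measure.restrict_apply hm,
      inter_comm, Ioo_inter_setOf_rpow_lt hβ hy.1, Real.volume_Ioo, sub_zero, indicator_of_mem hy]
  · rw [indicator_of_notMem hy]
    refine (setLIntegral_congr_fun measurableSet_Ioo fun r hr => ?_).trans lintegral_zero
    refine indicator_of_notMem (fun hry => hy ⟨?_, hry.2⟩) _
    exact (Real.rpow_pos_of_pos hr.1 β).trans hry.1

lemma integral_Ioo_integral_Ioo_rpow {β s : ℝ} (hβ : 0 < β) (hs : 0 ≤ s) {g : ℝ → ℝ}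
    (hgm : Measurable g) (hg : IntegrableOn g (Ioo 0 1)) (hg0 : ∀ y ∈ Ioo 0 1, 0 ≤ g y) :
    ∫ r in Ioo 0 s, ∫ y in Ioo (r ^ β) 1, g y = ∫ y in Ioo 0 1, g y * min s (y ^ (1 / β)) := by
  have hsub : ∀ r ∈ Ioo 0 s, Ioo (r ^ β) 1 ⊆ Ioo 0 1 := fun r hr =>
    Ioo_subset_Ioo_left (Real.rpow_nonneg hr.1.le β)
  have hinner : EqOn (fun r => ∫ y in Ioo (r ^ β) 1, g y)
      (fun r => (∫⁻ y in Ioo (r ^ β) 1, ENNReal.ofReal (g y)).toReal) (Ioo 0 s) := fun r hr =>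
    integral_eq_lintegral_of_nonneg_ae
      ((ae_restrict_iff' measurableSet_Ioo).2 (.of_forall fun y hy => hg0 y (hsub r hr hy)))
      hgm.aestronglyMeasurable
  rw [setIntegral_congr_fun measurableSet_Ioo hinner, integral_toReal
      (measurable_lintegral_Ioo_rpow β hgm.ennreal_ofReal).aemeasurable
      ((ae_restrict_iff' measurableSet_Ioo).2 (.of_forall fun r hr =>
        (hg.mono_set (hsub r hr)).lintegral_lt_top)),
    lintegral_Ioo_lintegral_Ioo_rpow hβ hgm.ennreal_ofReal,
    integral_eq_lintegral_of_nonneg_ae _ (by fun_prop)]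
  · congr 1
    refine setLIntegral_congr_fun measurableSet_Ioo fun y hy => ?_
    rw [ENNReal.ofReal_mul (hg0 y hy)]
  · exact (ae_restrict_iff' measurableSet_Ioo).2 (.of_forall fun y hy =>
      mul_nonneg (hg0 y hy) (le_min hs (Real.rpow_nonneg hy.1.le _)))

lemma integral_Ioo_integral_Ioo_rpow_mul_indicator {α β s : ℝ} (hα : 0 < α) (hβ : 0 < β)
    (hs : 0 ≤ s) {E : Set ℝ} (hE : MeasurableSet E) (hEs : E ⊆ Ioo 0 1) :
    ∫ r in Ioo 0 s, ∫ y in Ioo (r ^ β) 1, y ^ (α - 1) * E.indicator 1 y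
      = ∫ y in E, y ^ (α - 1) * min s (y ^ (1 / β)) := by
  have hind : (fun y : ℝ => y ^ (α - 1) * E.indicator 1 y) = E.indicator (· ^ (α - 1)) := by
    ext y; by_cases hy : y ∈ E <;> simp [hy]
  rw [hind, integral_Ioo_integral_Ioo_rpow (g := E.indicator (· ^ (α - 1))) hβ hs
      ((measurable_id.pow_const _).indicator hE)
      (((intervalIntegral.integrableOn_Ioo_rpow_iff one_pos).2 (by linarith)).indicator hE)
      (fun y hy => indicator_nonneg (fun y _ => Real.rpow_nonneg hy.1.le _) y)]
  rw [← inter_eq_right.2 hEs, ← setIntegral_indicator hE, inter_eq_right.2 hEs]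
  exact integral_congr_ae (.of_forall fun y =>
    (indicator_mul_left E _ fun y => min s (y ^ (1 / β))).symm)

namespace QuasiconcaveOn01

variable {φ : ℝ → ℝ}

lemma pos (hφ : QuasiconcaveOn01 φ) {u : ℝ} (hu : u ∈ Ioo 0 1) : 0 < φ u := hφ.2.1 u hu

lemma monotoneOn (hφ : QuasiconcaveOn01 φ) : MonotoneOn φ (Ioo 0 1) := hφ.2.2.2.1

lemma antitoneOn_div (hφ : QuasiconcaveOn01 φ) : AntitoneOn (fun t => φ t / t) (Ioo 0 1) :=
  hφ.2.2.2.2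

lemma div_mul_min_le (hφ : QuasiconcaveOn01 φ) {s u : ℝ} (hs : s ∈ Ioo 0 1)
    (hu : u ∈ Ioo 0 1) : φ s / s * min s u ≤ φ u := by
  rcases le_total s u with h | h
  · rw [min_eq_left h, div_mul_cancel₀ _ hs.1.ne']
    exact hφ.monotoneOn hs hu h
  · rw [min_eq_right h, ← le_div_iff₀ hu.1]
    exact hφ.antitoneOn_div hu hs h

lemma le_two_mul_half (hφ : QuasiconcaveOn01 φ) {u : ℝ} (hu : u ∈ Ioo 0 1) :
    φ u ≤ 2 * φ (1 / 2) := by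
  have hhalf : (1 / 2 : ℝ) ∈ Ioo 0 1 := by norm_num
  have := hφ.div_mul_min_le hu hhalf
  rcases le_total u (1 / 2) with h | h
  · rw [min_eq_left h, div_mul_cancel₀ _ hu.1.ne'] at this
    linarith [hφ.pos hhalf]
  · rw [min_eq_right h, div_mul_eq_mul_div, div_le_iff₀ hu.1] at this
    nlinarith [hφ.pos hhalf, hu.2]

end QuasiconcaveOn01

lemma rpow_mem_Ioo_zero_one {x : ℝ} (hx : x ∈ Ioo (0 : ℝ) 1) {p : ℝ} (hp : 0 < p) :
    x ^ p ∈ Ioo (0 : ℝ) 1 :=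
  ⟨Real.rpow_pos_of_pos hx.1 p, Real.rpow_lt_one hx.1.le hx.2 hp⟩

def phiWeight (α β : ℝ) (φ : ℝ → ℝ) (s : ℝ) : ℝ := φ (s ^ (1 / β)) * s ^ (α - 1)

section phiWeight

variable {α β : ℝ} {φ : ℝ → ℝ}

lemma phiWeight_nonneg (hβ : 0 < β) (hφ : QuasiconcaveOn01 φ) {s : ℝ} (hs : s ∈ Ioo 0 1) :
    0 ≤ phiWeight α β φ s :=
  mul_nonneg (hφ.pos (rpow_mem_Ioo_zero_one hs (by positivity))).le
    (Real.rpow_nonneg hs.1.le _)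

lemma div_mul_rpow_mul_min_le_phiWeight (hβ : 0 < β) (hφ : QuasiconcaveOn01 φ) {s y : ℝ}
    (hs : s ∈ Ioo 0 1) (hy : y ∈ Ioo 0 1) :
    φ s / s * (y ^ (α - 1) * min s (y ^ (1 / β))) ≤ phiWeight α β φ y := by
  rw [mul_left_comm, phiWeight, mul_comm _ (y ^ (α - 1))]
  exact mul_le_mul_of_nonneg_left
    (hφ.div_mul_min_le hs (rpow_mem_Ioo_zero_one hy (by positivity)))
    (Real.rpow_nonneg hy.1.le _)

lemma bddAbove_phiWeight_image (hα1 : α ≤ 1) (hβ : 0 < β) (hφ : QuasiconcaveOn01 φ) {t : ℝ}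
    (ht : 0 < t) : BddAbove (phiWeight α β φ '' Ioo t 1) := by
  refine ⟨2 * φ (1 / 2) * t ^ (α - 1), ?_⟩
  rintro _ ⟨u, hu, rfl⟩
  have hu01 : u ∈ Ioo (0 : ℝ) 1 := ⟨ht.trans hu.1, hu.2⟩
  exact mul_le_mul (hφ.le_two_mul_half (rpow_mem_Ioo_zero_one hu01 (by positivity)))
    (Real.rpow_le_rpow_of_nonpos ht hu.1.le (by linarith)) (Real.rpow_nonneg hu01.1.le _)
    (by linarith [hφ.pos (by norm_num : (1 / 2 : ℝ) ∈ Ioo 0 1)])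

lemma phiWeight_le_of_le_two_mul (hα1 : α ≤ 1) (hβ : 0 < β) (hφ : QuasiconcaveOn01 φ)
    {t u : ℝ} (ht : 0 < t) (htu : t ≤ u) (hu : u ≤ 2 * t) (h2t : 2 * t < 1) :
    phiWeight α β φ u ≤ 2 ^ (1 - α) * phiWeight α β φ (2 * t) := by
  have hu01 : u ∈ Ioo (0 : ℝ) 1 := ⟨ht.trans_le htu, hu.trans_lt h2t⟩
  have h2t01 : 2 * t ∈ Ioo (0 : ℝ) 1 := ⟨by linarith, h2t⟩
  have hpow : t ^ (α - 1) = 2 ^ (1 - α) * (2 * t) ^ (α - 1) := by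
    rw [Real.mul_rpow zero_le_two ht.le, ← mul_assoc, ← Real.rpow_add two_pos]
    norm_num
  calc phiWeight α β φ u ≤ φ ((2 * t) ^ (1 / β)) * t ^ (α - 1) :=
        mul_le_mul (hφ.monotoneOn (rpow_mem_Ioo_zero_one hu01 (by positivity))
            (rpow_mem_Ioo_zero_one h2t01 (by positivity))
            (Real.rpow_le_rpow hu01.1.le hu (by positivity)))
          (Real.rpow_le_rpow_of_nonpos ht htu (by linarith)) (Real.rpow_nonneg hu01.1.le _)
          (hφ.pos (rpow_mem_Ioo_zero_one h2t01 (by positivity))).le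
    _ = 2 ^ (1 - α) * phiWeight α β φ (2 * t) := by
        rw [hpow, phiWeight]; ring

end phiWeight

lemma integrableOn_rpow_mul_min {α β s : ℝ} (hα : 0 < α) (hs : 0 ≤ s) :
    IntegrableOn (fun y => y ^ (α - 1) * min s (y ^ (1 / β))) (Ioo 0 1) :=
  ((intervalIntegral.integrableOn_Ioo_rpow_iff one_pos).2 (by linarith)).mul_bdd (c := s)
    (by fun_prop) ((ae_restrict_iff' measurableSet_Ioo).2 (.of_forall fun y hy => by
      rw [Real.norm_of_nonneg (le_min hs (Real.rpow_nonneg hy.1.le _))]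
      exact min_le_left _ _))

def marcTerm (α β : ℝ) (φ : ℝ → ℝ) (E : Set ℝ) (s : ℝ) : ℝ :=
  φ s / s * ∫ r in Ioo (0 : ℝ) s, ∫ y in Ioo (r ^ β) 1, y ^ (α - 1) * E.indicator 1 y

section marcTerm

variable {α β : ℝ} {φ : ℝ → ℝ} {E : Set ℝ} {s t : ℝ}

lemma setIntegral_inter_Iic_le (hα : 0 < α) (hβ : 0 < β) (hφ : QuasiconcaveOn01 φ)
    (hE : MeasurableSet E) (hEs : E ⊆ Ioo 0 1) (hs : s ∈ Ioo 0 1) (ht : t ∈ Ioo 0 1) :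
    ∫ y in E ∩ Iic t, φ s / s * (y ^ (α - 1) * min s (y ^ (1 / β)))
      ≤ t * phiWeight α β φ t / α := by
  have hsub : E ∩ Iic t ⊆ Ioc 0 t := fun y hy => ⟨(hEs hy.1).1, hy.2⟩
  have hφt : 0 ≤ φ (t ^ (1 / β)) := (hφ.pos (rpow_mem_Ioo_zero_one ht (by positivity))).le
  have hIoc : IntegrableOn (fun y : ℝ => y ^ (α - 1)) (Ioc 0 t) :=
    (intervalIntegral.intervalIntegrable_rpow' (by linarith)).1
  calc ∫ y in E ∩ Iic t, φ s / s * (y ^ (α - 1) * min s (y ^ (1 / β)))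
      ≤ ∫ y in E ∩ Iic t, φ (t ^ (1 / β)) * y ^ (α - 1) := by
        refine setIntegral_mono_on (((integrableOn_rpow_mul_min hα hs.1.le).mono_set
          fun y hy => hEs hy.1).const_mul _) ((hIoc.mono_set hsub).const_mul _)
          (hE.inter measurableSet_Iic) fun y hy => ?_
        have hy01 := hEs hy.1
        refine (div_mul_rpow_mul_min_le_phiWeight hβ hφ hs hy01).trans ?_
        exact mul_le_mul_of_nonneg_right
          (hφ.monotoneOn (rpow_mem_Ioo_zero_one hy01 (by positivity))
            (rpow_mem_Ioo_zero_one ht (by positivity))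
            (Real.rpow_le_rpow hy01.1.le hy.2 (by positivity)))
          (Real.rpow_nonneg hy01.1.le _)
    _ ≤ ∫ y in Ioc 0 t, φ (t ^ (1 / β)) * y ^ (α - 1) :=
        setIntegral_mono_set (hIoc.const_mul _)
          ((ae_restrict_iff' measurableSet_Ioc).2 (.of_forall fun y hy =>
            mul_nonneg hφt (Real.rpow_nonneg hy.1.le _))) hsub.eventuallyLE
    _ = t * phiWeight α β φ t / α := by
        rw [integral_const_mul, ← intervalIntegral.integral_of_le ht.1.le,
          integral_rpow (Or.inl (by linarith)), Real.zero_rpow (by linarith), phiWeight,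
          sub_add_cancel, sub_zero, Real.rpow_sub_one ht.1.ne']
        field_simp [ht.1.ne']

lemma setIntegral_diff_Iic_le (hα : 0 < α) (hβ : 0 < β) (hφ : QuasiconcaveOn01 φ)
    (hE : MeasurableSet E) (hEs : E ⊆ Ioo 0 1) (ht : 0 ≤ t) (hvol : volume E ≤ ENNReal.ofReal t)
    (hs : s ∈ Ioo 0 1) {S : ℝ} (hS : ∀ y ∈ Ioo t 1, phiWeight α β φ y ≤ S) (hS0 : 0 ≤ S) :
    ∫ y in E \ Iic t, φ s / s * (y ^ (α - 1) * min s (y ^ (1 / β))) ≤ t * S := by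
  have hfin : volume (E \ Iic t) < ⊤ := (measure_mono sdiff_subset).trans_lt
    (hvol.trans_lt ENNReal.ofReal_lt_top)
  calc ∫ y in E \ Iic t, φ s / s * (y ^ (α - 1) * min s (y ^ (1 / β)))
      ≤ ∫ _ in E \ Iic t, S :=
        setIntegral_mono_on (((integrableOn_rpow_mul_min hα hs.1.le).mono_set
          fun y hy => hEs hy.1).const_mul _) (integrableOn_const hfin.ne)
          (hE.diff measurableSet_Iic) fun y hy =>
          (div_mul_rpow_mul_min_le_phiWeight hβ hφ hs (hEs hy.1)).trans
            (hS y ⟨not_le.1 hy.2, (hEs hy.1).2⟩)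
    _ ≤ t * S := by
        rw [setIntegral_const, smul_eq_mul]
        refine mul_le_mul_of_nonneg_right ?_ hS0
        exact ENNReal.toReal_le_of_le_ofReal ht ((measure_mono sdiff_subset).trans hvol)

lemma marcTerm_le (hα : 0 < α) (hα1 : α ≤ 1) (hβ : 0 < β) (hφ : QuasiconcaveOn01 φ)
    (ht : t ∈ Ioo 0 (1 / 2)) (hE : MeasurableSet E) (hEs : E ⊆ Ioo 0 1)
    (hvol : volume E = ENNReal.ofReal t) (hs : s ∈ Ioo 0 1) :
    marcTerm α β φ E s ≤ (1 + 2 ^ (1 - α) / α) * (t * sSup (phiWeight α β φ '' Ioo t 1)) := by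
  set S := sSup (phiWeight α β φ '' Ioo t 1)
  have h2t : 2 * t ∈ Ioo t 1 := ⟨by linarith [ht.1], by linarith [ht.2]⟩
  have hS : ∀ y ∈ Ioo t 1, phiWeight α β φ y ≤ S := fun y hy =>
    le_csSup (bddAbove_phiWeight_image hα1 hβ hφ ht.1) (mem_image_of_mem _ hy)
  have hS0 : 0 ≤ S := (phiWeight_nonneg hβ hφ ⟨ht.1.trans h2t.1, h2t.2⟩).trans (hS _ h2t)
  have hφt : phiWeight α β φ t ≤ 2 ^ (1 - α) * S :=
    (phiWeight_le_of_le_two_mul hα1 hβ hφ ht.1 le_rfl h2t.1.le h2t.2).trans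
      (mul_le_mul_of_nonneg_left (hS _ h2t) (by positivity))
  have hsmall := setIntegral_inter_Iic_le hα hβ hφ hE hEs hs ⟨ht.1, h2t.1.trans h2t.2⟩
  have hlarge := setIntegral_diff_Iic_le hα hβ hφ hE hEs ht.1.le hvol.le hs hS hS0
  have hsmall' : t * phiWeight α β φ t / α ≤ 2 ^ (1 - α) / α * (t * S) := by
    calc t * phiWeight α β φ t / α ≤ t * (2 ^ (1 - α) * S) / α := by gcongr; exact ht.1.le
      _ = 2 ^ (1 - α) / α * (t * S) := by ring
  rw [marcTerm, integral_Ioo_integral_Ioo_rpow_mul_indicator hα hβ hs.1.le hE hEs,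
    ← integral_const_mul, ← integral_inter_add_sdiff measurableSet_Iic
      (((integrableOn_rpow_mul_min hα hs.1.le).mono_set hEs).const_mul _)]
  calc _ ≤ 2 ^ (1 - α) / α * (t * S) + t * S := add_le_add (hsmall.trans hsmall') hlarge
    _ = (1 + 2 ^ (1 - α) / α) * (t * S) := by ring

lemma half_rpow_mul_phiWeight_le_marcTerm (hα : 0 < α) (hα1 : α ≤ 1) (hβ : 0 < β)
    (hφ : QuasiconcaveOn01 φ) {u : ℝ} (ht : 0 < t) (h2tu : 2 * t ≤ u) (hu : u < 1) :
    (1 / 2) ^ (1 / β) * (t * phiWeight α β φ u)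
      ≤ marcTerm α β φ (Ioo (u - t) u) (u ^ (1 / β)) := by
  have hu0 : 0 < u := by linarith
  have hs := rpow_mem_Ioo_zero_one ⟨hu0, hu⟩ (one_div_pos.2 hβ)
  have hEs : Ioo (u - t) u ⊆ Ioo 0 1 := Ioo_subset_Ioo (by linarith) hu.le
  have hpt : ∀ y ∈ Ioo (u - t) u, u ^ (α - 1) * ((1 / 2) ^ (1 / β) * u ^ (1 / β))
      ≤ y ^ (α - 1) * min (u ^ (1 / β)) (y ^ (1 / β)) := fun y hy => by
    have hy0 : 0 < y := by linarith [hy.1]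
    rw [← Real.mul_rpow (by norm_num) hu0.le]
    exact mul_le_mul (Real.rpow_le_rpow_of_nonpos hy0 hy.2.le (by linarith))
      (le_min (Real.rpow_le_rpow (by positivity) (by linarith) (by positivity))
        (Real.rpow_le_rpow (by positivity) (by linarith [hy.1]) (by positivity)))
      (by positivity) (Real.rpow_nonneg hy0.le _)
  have hint := setIntegral_mono_on (integrableOn_const measure_Ioo_lt_top.ne)
    ((integrableOn_rpow_mul_min hα hs.1.le).mono_set hEs) measurableSet_Ioo hpt
  rw [setIntegral_const, smul_eq_mul, Real.volume_real_Ioo_of_le (by linarith),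
    sub_sub_cancel] at hint
  rw [marcTerm, integral_Ioo_integral_Ioo_rpow_mul_indicator hα hβ hs.1.le measurableSet_Ioo hEs]
  calc (1 / 2) ^ (1 / β) * (t * phiWeight α β φ u)
      = φ (u ^ (1 / β)) / u ^ (1 / β)
          * (t * (u ^ (α - 1) * ((1 / 2) ^ (1 / β) * u ^ (1 / β)))) := by
        rw [phiWeight]; field_simp [hs.1.ne']
    _ ≤ _ := mul_le_mul_of_nonneg_left hint (div_nonneg (hφ.pos hs).le hs.1.le)

end marcTerm

section PhiFun

variable {α β t M : ℝ} {φ : ℝ → ℝ}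

lemma marcQ_le {E : Set ℝ} (h : ∀ s ∈ Ioo (0 : ℝ) 1, marcTerm α β φ E s ≤ M) :
    marcQ α β φ E ≤ M :=
  csSup_le ((nonempty_Ioo.2 one_pos).image _) (forall_mem_image.2 h)

lemma PhiFun_le (hM : ∀ E : Set ℝ, MeasurableSet E → E ⊆ Ioo 0 1 →
      volume E = ENNReal.ofReal t → ∀ s ∈ Ioo (0 : ℝ) 1, marcTerm α β φ E s ≤ M)
    (hM0 : 0 ≤ M) : PhiFun α β φ t ≤ M :=
  Real.sSup_le (fun _ ⟨E, hE, hEs, hvol, hv⟩ => hv ▸ marcQ_le (hM E hE hEs hvol)) hM0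

lemma marcTerm_le_PhiFun (hM : ∀ E : Set ℝ, MeasurableSet E → E ⊆ Ioo 0 1 →
      volume E = ENNReal.ofReal t → ∀ s ∈ Ioo (0 : ℝ) 1, marcTerm α β φ E s ≤ M)
    {E : Set ℝ} (hE : MeasurableSet E) (hEs : E ⊆ Ioo 0 1) (hvol : volume E = ENNReal.ofReal t)
    {s : ℝ} (hs : s ∈ Ioo 0 1) : marcTerm α β φ E s ≤ PhiFun α β φ t :=
  (le_csSup ⟨M, forall_mem_image.2 (hM E hE hEs hvol)⟩ (mem_image_of_mem _ hs)).trans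
    (le_csSup ⟨M, fun _ ⟨E', hE', hE's, hvol', hv⟩ => hv ▸ marcQ_le (hM E' hE' hE's hvol')⟩
      ⟨E, hE, hEs, hvol, rfl⟩)

lemma mul_phiWeight_le_PhiFun (hα : 0 < α) (hα1 : α ≤ 1) (hβ : 0 < β)
    (hφ : QuasiconcaveOn01 φ) (hM : ∀ E : Set ℝ, MeasurableSet E → E ⊆ Ioo 0 1 →
      volume E = ENNReal.ofReal t → ∀ s ∈ Ioo (0 : ℝ) 1, marcTerm α β φ E s ≤ M)
    (ht : t ∈ Ioo 0 (1 / 2)) {u : ℝ} (hu : u ∈ Ioo t 1) :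
    2 ^ (α - 1) * (1 / 2) ^ (1 / β) * t * phiWeight α β φ u ≤ PhiFun α β φ t := by
  have hfar : ∀ v, 2 * t ≤ v → v < 1 → (1 / 2) ^ (1 / β) * (t * phiWeight α β φ v)
      ≤ PhiFun α β φ t := fun v h2tv hv =>
    (half_rpow_mul_phiWeight_le_marcTerm hα hα1 hβ hφ ht.1 h2tv hv).trans
      (marcTerm_le_PhiFun hM measurableSet_Ioo (Ioo_subset_Ioo (by linarith [ht.1]) hv.le)
        (by rw [Real.volume_Ioo, sub_sub_cancel])
        (rpow_mem_Ioo_zero_one ⟨by linarith [ht.1], hv⟩ (one_div_pos.2 hβ)))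
  obtain ⟨ht0, ht2⟩ := ht
  have hfu := phiWeight_nonneg (α := α) hβ hφ ⟨ht0.trans hu.1, hu.2⟩
  rcases le_or_gt (2 * t) u with h2tu | hu2t
  · calc 2 ^ (α - 1) * (1 / 2) ^ (1 / β) * t * phiWeight α β φ u
        = 2 ^ (α - 1) * ((1 / 2) ^ (1 / β) * (t * phiWeight α β φ u)) := by ring
      _ ≤ (1 / 2) ^ (1 / β) * (t * phiWeight α β φ u) :=
          mul_le_of_le_one_left (by positivity)
            (Real.rpow_le_one_of_one_le_of_nonpos one_le_two (by linarith))
      _ ≤ PhiFun α β φ t := hfar u h2tu hu.2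
  · have h2 : (2 : ℝ) ^ (α - 1) * 2 ^ (1 - α) = 1 := by
      rw [← Real.rpow_add two_pos]; norm_num
    calc 2 ^ (α - 1) * (1 / 2) ^ (1 / β) * t * phiWeight α β φ u
        ≤ 2 ^ (α - 1) * (1 / 2) ^ (1 / β) * t * (2 ^ (1 - α) * phiWeight α β φ (2 * t)) := by
          gcongr
          exact phiWeight_le_of_le_two_mul hα1 hβ hφ ht0 hu.1.le hu2t.le (by linarith)
      _ = (1 / 2) ^ (1 / β) * (t * phiWeight α β φ (2 * t)) := by
          linear_combination ((1 / 2) ^ (1 / β) * t * phiWeight α β φ (2 * t)) * h2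
      _ ≤ PhiFun α β φ t := hfar (2 * t) le_rfl (by linarith)

end PhiFun

theorem statement8_general (α β : ℝ) (hα : 0 < α) (hα1 : α < 1) (hβ : 0 < β) :
    ∃ c₁ c₂ : ℝ, 0 < c₁ ∧ 0 < c₂ ∧
      ∀ φ : ℝ → ℝ, QuasiconcaveOn01 φ →
        ∀ t ∈ Set.Ioo (0:ℝ) (1/2),
          c₁ * (t * sSup ((fun s => φ (s ^ (1/β)) * s ^ (α - 1)) '' Set.Ioo t 1))
              ≤ PhiFun α β φ t ∧
          PhiFun α β φ t
              ≤ c₂ * (t * sSup ((fun s => φ (s ^ (1/β)) * s ^ (α - 1)) '' Set.Ioo t 1)) := by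
  refine ⟨2 ^ (α - 1) * (1 / 2) ^ (1 / β), 1 + 2 ^ (1 - α) / α, by positivity, by positivity,
    fun φ hφ t ht => ?_⟩
  have hM : ∀ E : Set ℝ, MeasurableSet E → E ⊆ Ioo 0 1 → volume E = ENNReal.ofReal t →
      ∀ s ∈ Ioo (0 : ℝ) 1, marcTerm α β φ E s ≤ _ := fun E hE hEs hvol s hs =>
    marcTerm_le hα hα1.le hβ hφ ht hE hEs hvol hs
  have ht0 := ht.1
  have h2t : 2 * t ∈ Ioo t 1 := ⟨by linarith, by linarith [ht.2]⟩
  have hS0 : 0 ≤ sSup (phiWeight α β φ '' Ioo t 1) :=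
    (phiWeight_nonneg hβ hφ ⟨ht0.trans h2t.1, h2t.2⟩).trans
      (le_csSup (bddAbove_phiWeight_image hα1.le hβ hφ ht0) (mem_image_of_mem _ h2t))
  have hct : 0 < 2 ^ (α - 1) * (1 / 2 : ℝ) ^ (1 / β) * t := by positivity
  refine ⟨?_, PhiFun_le hM (by positivity)⟩
  rw [← mul_assoc, mul_comm, ← le_div_iff₀ hct]
  exact csSup_le ⟨_, mem_image_of_mem _ h2t⟩ (forall_mem_image.2 fun u hu =>
    (le_div_iff₀' hct).2 (mul_phiWeight_le_PhiFun hα hα1.le hβ hφ hM ht hu))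

theorem statement8 (α β : ℝ) (hα : 0 < α) (hα1 : α < 1) (hβ : 0 < β)
    (hαβ : 1 ≤ α + 1 / β) :
    ∃ c₁ c₂ : ℝ, 0 < c₁ ∧ 0 < c₂ ∧
      ∀ φ : ℝ → ℝ, QuasiconcaveOn01 φ →
        ∀ t ∈ Set.Ioo (0:ℝ) (1/2),
          c₁ * (t * sSup ((fun s => φ (s ^ (1/β)) * s ^ (α - 1)) '' Set.Ioo t 1))
              ≤ PhiFun α β φ t ∧
          PhiFun α β φ t
              ≤ c₂ * (t * sSup ((fun s => φ (s ^ (1/β)) * s ^ (α - 1)) '' Set.Ioo t 1)) :=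
  statement8_general α β hα hα1 hβ
end
end
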